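/- Let α > 0 and set φ_α(ξ) = ξ^{2(α+1)} − ξ². There exists a constant C > 0 such that for every μ ≥ 1 the improper Riemann integral lim_{R→∞} ∫_{1}^{R} e^{i μ^{1+1/α} φ_α(ξ)} dξ exists and its absolute value is at most C μ^{−1−1/α}; moreover, μ ↦ lim_{R→∞} ∫_{1}^{R} e^{i μ^{1+1/α} φ_α(ξ)} dξ is continuous on [1, ∞). -/

import Mathlib

/-!
On `[1, ∞)` the phase has `φ_α' ≥ 2αξ > 0` and `φ_α'' ≥ 0`, so `1/φ_α'` decreases to `0`.
Writing `e^{itφ} = (it)⁻¹ (e^{itφ})' / φ'` and integrating by parts turns `∫_1^R e^{itφ}` into a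
boundary term that vanishes as `R → ∞` plus `(it)⁻¹ ∫_1^R e^{itφ} φ''/φ'²`, whose integrand is
dominated by `-(1/φ')'`, of total mass `1/φ'(1) = 1/(2α)`. This gives the limit, the bound
`2/(|t| φ'(1)) = α⁻¹ t⁻¹` with `t = μ^{1+1/α}`, and continuity in `t` by dominated convergence.
-/

open MeasureTheory Filter

/-- The rescaled phase `φ_α(ξ) = ξ^{2(α+1)} - ξ²`. -/
noncomputable def phase (α ξ : ℝ) : ℝ := ξ ^ (2 * (α + 1)) - ξ ^ 2

open Set Topology

noncomputable def expPhase (φ : ℝ → ℝ) (t x : ℝ) : ℂ :=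
  Complex.exp (Complex.I * ((t * φ x : ℝ) : ℂ))

@[simp]
lemma norm_expPhase (φ : ℝ → ℝ) (t x : ℝ) : ‖expPhase φ t x‖ = 1 := by
  simp [expPhase, Complex.norm_exp]

lemma continuous_expPhase_freq (φ : ℝ → ℝ) (x : ℝ) : Continuous fun t => expPhase φ t x := by
  unfold expPhase; fun_prop

lemma ContinuousOn.expPhase {φ : ℝ → ℝ} {s : Set ℝ} (hφ : ContinuousOn φ s) (t : ℝ) :
    ContinuousOn (expPhase φ t) s := by
  unfold _root_.expPhase; fun_prop

lemma HasDerivAt.expPhase {φ : ℝ → ℝ} {φ' x : ℝ} (hφ : HasDerivAt φ φ' x) (t : ℝ) :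
    HasDerivAt (expPhase φ t) (Complex.I * t * φ' * expPhase φ t x) x := by
  refine ((hφ.const_mul t).ofReal_comp.const_mul Complex.I).cexp.congr_deriv ?_
  rw [_root_.expPhase]; push_cast; ring

/-- The value of `∫_a^∞ e^{itφ}` produced by one integration by parts; the integral itself
converges only conditionally. -/
noncomputable def oscillatoryTail (φ φ' φ'' : ℝ → ℝ) (a t : ℝ) : ℂ :=
  (Complex.I * t)⁻¹ *
    ((∫ x in Ioi a, expPhase φ t x * ((φ'' x / φ' x ^ 2 : ℝ) : ℂ)) - expPhase φ t a / φ' a)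

section OscillatoryIntegral

variable {φ φ' φ'' : ℝ → ℝ} {a : ℝ}

lemma hasDerivAt_neg_inv_deriv (hφ' : ∀ x ∈ Ici a, HasDerivAt φ' (φ'' x) x)
    (hpos : ∀ x ∈ Ici a, 0 < φ' x) {x : ℝ} (hx : x ∈ Ici a) :
    HasDerivAt (fun y => -(φ' y)⁻¹) (φ'' x / φ' x ^ 2) x :=
  ((hφ' x hx).inv (hpos x hx).ne').neg.congr_deriv (by ring)

lemma integrableOn_deriv2_div_sq (hφ' : ∀ x ∈ Ici a, HasDerivAt φ' (φ'' x) x)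
    (hpos : ∀ x ∈ Ici a, 0 < φ' x) (hconv : ∀ x ∈ Ioi a, 0 ≤ φ'' x)
    (htop : Tendsto φ' atTop atTop) :
    IntegrableOn (fun x => φ'' x / φ' x ^ 2) (Ioi a) :=
  integrableOn_Ioi_deriv_of_nonneg' (fun x hx => hasDerivAt_neg_inv_deriv hφ' hpos hx)
    (fun x hx => div_nonneg (hconv x hx) (sq_nonneg _)) (by simpa using htop.inv_tendsto_atTop.neg)

lemma integral_deriv2_div_sq (hφ' : ∀ x ∈ Ici a, HasDerivAt φ' (φ'' x) x)
    (hpos : ∀ x ∈ Ici a, 0 < φ' x) (hconv : ∀ x ∈ Ioi a, 0 ≤ φ'' x)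
    (htop : Tendsto φ' atTop atTop) :
    ∫ x in Ioi a, φ'' x / φ' x ^ 2 = (φ' a)⁻¹ := by
  rw [integral_Ioi_of_hasDerivAt_of_nonneg' (fun x hx => hasDerivAt_neg_inv_deriv hφ' hpos hx)
    (fun x hx => div_nonneg (hconv x hx) (sq_nonneg _)) (by simpa using htop.inv_tendsto_atTop.neg)]
  ring

lemma norm_expPhase_mul_le (t x : ℝ) (hx : 0 ≤ φ'' x) :
    ‖expPhase φ t x * ((φ'' x / φ' x ^ 2 : ℝ) : ℂ)‖ ≤ φ'' x / φ' x ^ 2 := by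
  rw [norm_mul, norm_expPhase, one_mul, Complex.norm_real, Real.norm_of_nonneg (by positivity)]

lemma integrableOn_expPhase_mul (hφ : ∀ x ∈ Ici a, HasDerivAt φ (φ' x) x)
    (hφ' : ∀ x ∈ Ici a, HasDerivAt φ' (φ'' x) x) (hpos : ∀ x ∈ Ici a, 0 < φ' x)
    (hconv : ∀ x ∈ Ioi a, 0 ≤ φ'' x) (htop : Tendsto φ' atTop atTop) (t : ℝ) :
    IntegrableOn (fun x => expPhase φ t x * ((φ'' x / φ' x ^ 2 : ℝ) : ℂ)) (Ioi a) := by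
  refine (integrableOn_deriv2_div_sq hφ' hpos hconv htop).ofReal.bdd_mul (c := 1) ?_ ?_
  · exact ((HasDerivAt.continuousOn hφ).expPhase t |>.mono Ioi_subset_Ici_self)
      |>.aestronglyMeasurable measurableSet_Ioi
  · exact ae_of_all _ fun x => (norm_expPhase φ t x).le

lemma mul_intervalIntegral_expPhase (hφ : ∀ x ∈ Ici a, HasDerivAt φ (φ' x) x)
    (hφ' : ∀ x ∈ Ici a, HasDerivAt φ' (φ'' x) x) (hpos : ∀ x ∈ Ici a, 0 < φ' x)
    (hconv : ∀ x ∈ Ioi a, 0 ≤ φ'' x) (htop : Tendsto φ' atTop atTop) (t : ℝ) {R : ℝ}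
    (hR : a ≤ R) :
    Complex.I * t * ∫ x in a..R, expPhase φ t x =
      expPhase φ t R / φ' R - expPhase φ t a / φ' a +
        ∫ x in a..R, expPhase φ t x * ((φ'' x / φ' x ^ 2 : ℝ) : ℂ) := by
  have hIcc : ∀ x ∈ uIcc a R, x ∈ Ici a := fun x hx => (uIcc_of_le hR ▸ hx).1
  have hderiv : ∀ x ∈ uIcc a R, HasDerivAt (fun y => expPhase φ t y / φ' y)
      (Complex.I * t * expPhase φ t x - expPhase φ t x * ((φ'' x / φ' x ^ 2 : ℝ) : ℂ)) x := by
    intro x hx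
    have hne : (φ' x : ℂ) ≠ 0 := by exact_mod_cast (hpos x (hIcc x hx)).ne'
    refine (((hφ x (hIcc x hx)).expPhase t).div (hφ' x (hIcc x hx)).ofReal_comp hne).congr_deriv ?_
    push_cast
    field_simp
  have hexp : IntervalIntegrable (expPhase φ t) volume a R :=
    ((HasDerivAt.continuousOn hφ).expPhase t |>.mono fun x hx => hIcc x hx).intervalIntegrable
  have hweighted := (intervalIntegrable_iff_integrableOn_Ioc_of_le hR).2
    ((integrableOn_expPhase_mul hφ hφ' hpos hconv htop t).mono_set Ioc_subset_Ioi_self)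
  have hFTC := intervalIntegral.integral_eq_sub_of_hasDerivAt hderiv
    ((hexp.const_mul _).sub hweighted)
  rw [intervalIntegral.integral_sub (hexp.const_mul _) hweighted,
    intervalIntegral.integral_const_mul] at hFTC
  linear_combination hFTC

lemma tendsto_intervalIntegral_expPhase (hφ : ∀ x ∈ Ici a, HasDerivAt φ (φ' x) x)
    (hφ' : ∀ x ∈ Ici a, HasDerivAt φ' (φ'' x) x) (hpos : ∀ x ∈ Ici a, 0 < φ' x)
    (hconv : ∀ x ∈ Ioi a, 0 ≤ φ'' x) (htop : Tendsto φ' atTop atTop) {t : ℝ} (ht : t ≠ 0) :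
    Tendsto (fun R => ∫ x in a..R, expPhase φ t x) atTop
      (𝓝 (oscillatoryTail φ φ' φ'' a t)) := by
  have hit : Complex.I * t ≠ 0 := mul_ne_zero Complex.I_ne_zero (by exact_mod_cast ht)
  have hboundary : Tendsto (fun R => expPhase φ t R / φ' R) atTop (𝓝 0) := by
    rw [tendsto_zero_iff_norm_tendsto_zero]
    simpa using htop.inv_tendsto_atTop.norm
  have hlim := ((hboundary.sub_const (expPhase φ t a / φ' a)).add
    (intervalIntegral_tendsto_integral_Ioi a
      (integrableOn_expPhase_mul hφ hφ' hpos hconv htop t) tendsto_id)).const_mul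
    (Complex.I * t)⁻¹
  refine (hlim.congr' ?_).trans_eq ?_
  · filter_upwards [eventually_ge_atTop a] with R hR
    rw [id, ← mul_intervalIntegral_expPhase hφ hφ' hpos hconv htop t hR, inv_mul_cancel_left₀ hit]
  · rw [oscillatoryTail, zero_sub, neg_add_eq_sub]

lemma norm_oscillatoryTail_le (hφ' : ∀ x ∈ Ici a, HasDerivAt φ' (φ'' x) x)
    (hpos : ∀ x ∈ Ici a, 0 < φ' x) (hconv : ∀ x ∈ Ioi a, 0 ≤ φ'' x)
    (htop : Tendsto φ' atTop atTop) (t : ℝ) :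
    ‖oscillatoryTail φ φ' φ'' a t‖ ≤ 2 / (|t| * φ' a) := by
  have hpa := hpos a self_mem_Ici
  have hintegral : ‖∫ x in Ioi a, expPhase φ t x * ((φ'' x / φ' x ^ 2 : ℝ) : ℂ)‖ ≤ (φ' a)⁻¹ := by
    rw [← integral_deriv2_div_sq hφ' hpos hconv htop]
    exact norm_integral_le_of_norm_le (integrableOn_deriv2_div_sq hφ' hpos hconv htop)
      (ae_restrict_of_forall_mem measurableSet_Ioi fun x hx =>
        norm_expPhase_mul_le t x (hconv x hx))
  have hboundary : ‖expPhase φ t a / φ' a‖ = (φ' a)⁻¹ := by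
    rw [norm_div, norm_expPhase, Complex.norm_real, Real.norm_of_nonneg hpa.le, one_div]
  calc ‖oscillatoryTail φ φ' φ'' a t‖
      ≤ |t|⁻¹ * ((φ' a)⁻¹ + (φ' a)⁻¹) := by
        rw [oscillatoryTail, norm_mul, norm_inv, norm_mul, Complex.norm_I, one_mul,
          Complex.norm_real, Real.norm_eq_abs]
        gcongr
        exact (norm_sub_le _ _).trans (by rw [hboundary]; gcongr)
    _ = 2 / (|t| * φ' a) := by field_simp; ring

lemma continuousOn_oscillatoryTail (hφ : ∀ x ∈ Ici a, HasDerivAt φ (φ' x) x)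
    (hφ' : ∀ x ∈ Ici a, HasDerivAt φ' (φ'' x) x) (hpos : ∀ x ∈ Ici a, 0 < φ' x)
    (hconv : ∀ x ∈ Ioi a, 0 ≤ φ'' x) (htop : Tendsto φ' atTop atTop) :
    ContinuousOn (oscillatoryTail φ φ' φ'' a) {0}ᶜ := by
  have hintegral : Continuous fun t =>
      ∫ x in Ioi a, expPhase φ t x * ((φ'' x / φ' x ^ 2 : ℝ) : ℂ) :=
    continuous_of_dominated
      (fun t => (integrableOn_expPhase_mul hφ hφ' hpos hconv htop t).aestronglyMeasurable)
      (fun t => ae_restrict_of_forall_mem measurableSet_Ioi fun x hx =>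
        norm_expPhase_mul_le t x (hconv x hx))
      (integrableOn_deriv2_div_sq hφ' hpos hconv htop)
      (ae_of_all _ fun x => (continuous_expPhase_freq φ x).mul continuous_const)
  refine ContinuousOn.mul ?_ (hintegral.sub
    ((continuous_expPhase_freq φ a).div_const _)).continuousOn
  exact (by fun_prop : Continuous fun t : ℝ => Complex.I * t).continuousOn.inv₀ fun t ht =>
    mul_ne_zero Complex.I_ne_zero (by exact_mod_cast ht)

end OscillatoryIntegral

noncomputable def phase' (α ξ : ℝ) : ℝ := 2 * (α + 1) * ξ ^ (2 * α + 1) - 2 * ξ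

noncomputable def phase'' (α ξ : ℝ) : ℝ := 2 * (α + 1) * (2 * α + 1) * ξ ^ (2 * α) - 2

section Phase

variable (α : ℝ) {ξ : ℝ}

lemma hasDerivAt_phase (hξ : 0 < ξ) : HasDerivAt (phase α) (phase' α ξ) ξ := by
  refine ((Real.hasDerivAt_rpow_const (p := 2 * (α + 1)) (.inl hξ.ne')).sub
    (hasDerivAt_pow 2 ξ)).congr_deriv ?_
  rw [phase', show 2 * (α + 1) - 1 = 2 * α + 1 by ring]
  ring

lemma hasDerivAt_phase' (hξ : 0 < ξ) : HasDerivAt (phase' α) (phase'' α ξ) ξ := by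
  refine (((Real.hasDerivAt_rpow_const (p := 2 * α + 1) (.inl hξ.ne')).const_mul
    (2 * (α + 1))).sub ((hasDerivAt_id ξ).const_mul 2)).congr_deriv ?_
  rw [phase'', show 2 * α + 1 - 1 = 2 * α by ring]
  ring

lemma phase'_one : phase' α 1 = 2 * α := by
  rw [phase', Real.one_rpow]; ring

variable {α}

lemma mul_le_phase' (hα : 0 ≤ α) (hξ : 1 ≤ ξ) : 2 * α * ξ ≤ phase' α ξ := by
  have : ξ ≤ ξ ^ (2 * α + 1) := by
    simpa using Real.rpow_le_rpow_of_exponent_le hξ (by linarith : (1 : ℝ) ≤ 2 * α + 1)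
  rw [phase']
  nlinarith

lemma phase'_pos (hα : 0 < α) (hξ : 1 ≤ ξ) : 0 < phase' α ξ :=
  (by positivity : 0 < 2 * α * ξ).trans_le (mul_le_phase' hα.le hξ)

lemma phase''_nonneg (hα : 0 ≤ α) (hξ : 1 ≤ ξ) : 0 ≤ phase'' α ξ := by
  have : 2 * 1 * 1 * 1 ≤ 2 * (α + 1) * (2 * α + 1) * ξ ^ (2 * α) := by
    gcongr
    · linarith
    · linarith
    · exact Real.one_le_rpow hξ (by linarith)
  rw [phase'']
  linarith

lemma tendsto_phase'_atTop (hα : 0 < α) : Tendsto (phase' α) atTop atTop :=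
  tendsto_atTop_mono' atTop (eventually_ge_atTop 1 |>.mono fun _ hξ => mul_le_phase' hα.le hξ)
    (tendsto_id.const_mul_atTop (by positivity))

end Phase

theorem far_field_decay (α : ℝ) (hα : 0 < α) :
    ∃ C : ℝ, 0 < C ∧
      ∃ g : ℝ → ℂ,
        (∀ μ : ℝ, 1 ≤ μ →
          Tendsto
            (fun R : ℝ => ∫ ξ in (1 : ℝ)..R,
              Complex.exp (Complex.I * ((μ ^ (1 + 1 / α) * phase α ξ : ℝ) : ℂ)))
            atTop (nhds (g μ))) ∧
        (∀ μ : ℝ, 1 ≤ μ → ‖g μ‖ ≤ C * μ ^ (-1 - 1 / α : ℝ)) ∧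
        ContinuousOn g (Set.Ici (1 : ℝ)) := by
  have hφ : ∀ ξ ∈ Ici (1 : ℝ), HasDerivAt (phase α) (phase' α ξ) ξ :=
    fun ξ hξ => hasDerivAt_phase α (zero_lt_one.trans_le hξ)
  have hφ' : ∀ ξ ∈ Ici (1 : ℝ), HasDerivAt (phase' α) (phase'' α ξ) ξ :=
    fun ξ hξ => hasDerivAt_phase' α (zero_lt_one.trans_le hξ)
  have hpos : ∀ ξ ∈ Ici (1 : ℝ), 0 < phase' α ξ := fun ξ hξ => phase'_pos hα hξ
  have hconv : ∀ ξ ∈ Ioi (1 : ℝ), 0 ≤ phase'' α ξ := fun ξ hξ => phase''_nonneg hα.le hξ.le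
  have hfreq : ∀ μ : ℝ, 1 ≤ μ → 0 < μ ^ (1 + 1 / α) :=
    fun μ hμ => Real.rpow_pos_of_pos (zero_lt_one.trans_le hμ) _
  refine ⟨α⁻¹, inv_pos.2 hα,
    fun μ => oscillatoryTail (phase α) (phase' α) (phase'' α) 1 (μ ^ (1 + 1 / α)),
    fun μ hμ => tendsto_intervalIntegral_expPhase hφ hφ' hpos hconv (tendsto_phase'_atTop hα)
      (hfreq μ hμ).ne',
    fun μ hμ => ?_, ?_⟩
  · refine (norm_oscillatoryTail_le hφ' hpos hconv (tendsto_phase'_atTop hα) _).trans_eq ?_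
    rw [phase'_one, abs_of_pos (hfreq μ hμ), show (-1 - 1 / α : ℝ) = -(1 + 1 / α) by ring,
      Real.rpow_neg (zero_le_one.trans hμ)]
    field_simp
  · refine (continuousOn_oscillatoryTail hφ hφ' hpos hconv (tendsto_phase'_atTop hα)).comp
      (fun μ hμ => ?_) fun μ hμ => (hfreq μ hμ).ne'
    exact (Real.continuousAt_rpow_const μ _ (.inl (zero_lt_one.trans_le hμ).ne')).continuousWithinAt
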